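/- The explicit Laplace transform E[e^{-σV}] from (3.14) satisfies E[e^{-σV}] ~ (9/2)(3√2 - 4)·e^{-√6·σ^{1/4}} as σ → +∞. -/

import Mathlib

open Real Filter Asymptotics

noncomputable def Ppoly (r : ℝ) : ℝ :=
  96 * (-252 - 399 * Real.sqrt 3 * r - 756 * r ^ 2 - 161 * Real.sqrt 3 * r ^ 3
    + 170 * r ^ 4 + 153 * Real.sqrt 3 * r ^ 5 + 144 * r ^ 6 + 22 * Real.sqrt 3 * r ^ 7
    + 4 * r ^ 8)

noncomputable def P1poly (r γ : ℝ) : ℝ :=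
  126 * (168 + 85 * γ) + 63 * Real.sqrt 3 * r * (867 + 596 * γ)
    + 1323 * r ^ 2 * (132 + 95 * γ) + 28 * Real.sqrt 3 * r ^ 3 * (3153 + 2300 * γ)
    + 24 * r ^ 4 * (2463 + 1843 * γ) + Real.sqrt 3 * r ^ 5 * (588 + 905 * γ)
    - 36 * r ^ 6 * (177 + 124 * γ) - 6 * Real.sqrt 3 * r ^ 7 * (174 + 127 * γ)
    - 36 * r ^ 8 * (4 + 3 * γ)

noncomputable def P2poly (r γ : ℝ) : ℝ :=
  -8 * (63 * (24 + 17 * γ) + 63 * Real.sqrt 3 * r * (105 + 74 * γ)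
    + 378 * r ^ 2 * (78 + 55 * γ) + 14 * Real.sqrt 3 * r ^ 3 * (1569 + 1108 * γ)
    + 12 * r ^ 4 * (2337 + 1652 * γ) + Real.sqrt 3 * r ^ 5 * (6954 + 4919 * γ)
    + 18 * r ^ 6 * (154 + 109 * γ) + 6 * Real.sqrt 3 * r ^ 7 * (24 + 17 * γ))

noncomputable def P3poly (r γ : ℝ) : ℝ :=
  126 * (24 + 17 * γ) + 63 * Real.sqrt 3 * r * (277 + 196 * γ)
    + 189 * r ^ 2 * (516 + 365 * γ) + 28 * Real.sqrt 3 * r ^ 3 * (3399 + 2404 * γ)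
    + 24 * r ^ 4 * (7193 + 5087 * γ) + Real.sqrt 3 * r ^ 5 * (68436 + 48397 * γ)
    + 36 * r ^ 6 * (1465 + 1036 * γ) + 6 * Real.sqrt 3 * r ^ 7 * (1342 + 949 * γ)
    + 12 * r ^ 8 * (140 + 99 * γ)

noncomputable def Qpoly (r : ℝ) : ℝ := 1 + Real.sqrt 3 * r + r ^ 2

/-- The Laplace transform E[e^{-σV}] of the finite Voronoï cell volume law,
formula (3.14), with r = σ^{1/4}. -/
noncomputable def Elaplace (σ : ℝ) : ℝ :=
  let r := σ ^ ((1 : ℝ) / 4)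
  (3 / 2) * (Ppoly r +
      (P1poly r (Real.sqrt 2) * Real.exp (Real.sqrt 6 * r)
        + P1poly r (-Real.sqrt 2) * Real.exp (-(Real.sqrt 6 * r)))
      + (P2poly r (Real.sqrt 2) * Real.exp (2 * Real.sqrt 6 * r)
        + P2poly r (-Real.sqrt 2) * Real.exp (-(2 * Real.sqrt 6 * r)))
      + (P3poly r (Real.sqrt 2) * Real.exp (3 * Real.sqrt 6 * r)
        + P3poly r (-Real.sqrt 2) * Real.exp (-(3 * Real.sqrt 6 * r)))) /
    (Qpoly r * (4 + (4 + 3 * Real.sqrt 2) * Real.exp (Real.sqrt 6 * r)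
        + (4 - 3 * Real.sqrt 2) * Real.exp (-(Real.sqrt 6 * r))) - 12) ^ 4

/-!
Put `r = σ ^ (1/4)`, `x = r⁻¹` and `t = e^{-√6 r}`. Dividing the numerator of (3.14) by
`r ^ 8 e^{3√6 r}` and the base of its denominator by `r ^ 2 e^{√6 r}` writes
`e^{√6 r} E[e^{-σV}]` as a rational function of `(x, t)` whose denominator does not vanish at the
origin, where it takes the value `(9/2)(3√2 - 4)`; and `(x, t) → (0, 0)` as `σ → ∞`.
-/

open Topology

lemma isEquivalent_const_mul_of_tendsto_div {α 𝕜 : Type*} [NormedField 𝕜] {l : Filter α}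
    {u v : α → 𝕜} {c : 𝕜} (hc : c ≠ 0) (h : Tendsto (fun x ↦ u x / v x) l (𝓝 c)) :
    u ~[l] fun x ↦ c * v x := by
  refine isEquivalent_of_tendsto_one ?_
  have := h.div_const c
  rw [div_self hc] at this
  refine this.congr fun x ↦ ?_
  simp only [Pi.div_apply]
  ring

lemma tendsto_inv_exp_neg_mul_atTop {a : ℝ} (ha : 0 < a) :
    Tendsto (fun r : ℝ ↦ (r⁻¹, exp (-(a * r)))) atTop (𝓝 (0, 0)) :=
  tendsto_inv_atTop_zero.prodMk_nhds
    (tendsto_exp_neg_atTop_nhds_zero.comp (tendsto_id.const_mul_atTop ha))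

lemma div_pow_div_eq_of_eq_mul {K : Type*} [Field K] {a b c d s t : K} (hs : s ≠ 0) (ht : t ≠ 0)
    (ha : a = s ^ 4 * t * c) (hb : b = s * d) : a / b ^ 4 / t = c / d ^ 4 := by
  rw [ha, hb, mul_pow, div_div, mul_right_comm, mul_div_mul_right _ _ ht,
    mul_div_mul_left _ _ (pow_ne_zero 4 hs)]

noncomputable def PpolyRev (x : ℝ) : ℝ :=
  96 * (-252 * x ^ 8 - 399 * √3 * x ^ 7 - 756 * x ^ 6 - 161 * √3 * x ^ 5
    + 170 * x ^ 4 + 153 * √3 * x ^ 3 + 144 * x ^ 2 + 22 * √3 * x + 4)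

noncomputable def P1polyRev (x γ : ℝ) : ℝ :=
  126 * (168 + 85 * γ) * x ^ 8 + 63 * √3 * (867 + 596 * γ) * x ^ 7
    + 1323 * (132 + 95 * γ) * x ^ 6 + 28 * √3 * (3153 + 2300 * γ) * x ^ 5
    + 24 * (2463 + 1843 * γ) * x ^ 4 + √3 * (588 + 905 * γ) * x ^ 3
    - 36 * (177 + 124 * γ) * x ^ 2 - 6 * √3 * (174 + 127 * γ) * x
    - 36 * (4 + 3 * γ)

noncomputable def P2polyRev (x γ : ℝ) : ℝ :=
  -8 * (63 * (24 + 17 * γ) * x ^ 8 + 63 * √3 * (105 + 74 * γ) * x ^ 7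
    + 378 * (78 + 55 * γ) * x ^ 6 + 14 * √3 * (1569 + 1108 * γ) * x ^ 5
    + 12 * (2337 + 1652 * γ) * x ^ 4 + √3 * (6954 + 4919 * γ) * x ^ 3
    + 18 * (154 + 109 * γ) * x ^ 2 + 6 * √3 * (24 + 17 * γ) * x)

noncomputable def P3polyRev (x γ : ℝ) : ℝ :=
  126 * (24 + 17 * γ) * x ^ 8 + 63 * √3 * (277 + 196 * γ) * x ^ 7
    + 189 * (516 + 365 * γ) * x ^ 6 + 28 * √3 * (3399 + 2404 * γ) * x ^ 5
    + 24 * (7193 + 5087 * γ) * x ^ 4 + √3 * (68436 + 48397 * γ) * x ^ 3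
    + 36 * (1465 + 1036 * γ) * x ^ 2 + 6 * √3 * (1342 + 949 * γ) * x
    + 12 * (140 + 99 * γ)

lemma Ppoly_eq_pow_mul_PpolyRev {r : ℝ} (hr : r ≠ 0) : Ppoly r = r ^ 8 * PpolyRev r⁻¹ := by
  unfold Ppoly PpolyRev; field_simp

lemma P1poly_eq_pow_mul_P1polyRev {r : ℝ} (hr : r ≠ 0) (γ : ℝ) :
    P1poly r γ = r ^ 8 * P1polyRev r⁻¹ γ := by
  unfold P1poly P1polyRev; field_simp

lemma P2poly_eq_pow_mul_P2polyRev {r : ℝ} (hr : r ≠ 0) (γ : ℝ) :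
    P2poly r γ = r ^ 8 * P2polyRev r⁻¹ γ := by
  unfold P2poly P2polyRev; field_simp

lemma P3poly_eq_pow_mul_P3polyRev {r : ℝ} (hr : r ≠ 0) (γ : ℝ) :
    P3poly r γ = r ^ 8 * P3polyRev r⁻¹ γ := by
  unfold P3poly P3polyRev; field_simp

noncomputable def laplaceNum (x t : ℝ) : ℝ :=
  (3 / 2) * (t ^ 3 * PpolyRev x
    + t ^ 2 * P1polyRev x √2 + t ^ 4 * P1polyRev x (-√2)
    + t * P2polyRev x √2 + t ^ 5 * P2polyRev x (-√2)
    + P3polyRev x √2 + t ^ 6 * P3polyRev x (-√2))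

noncomputable def laplaceDen (x t : ℝ) : ℝ :=
  (x ^ 2 + √3 * x + 1) * (4 * t + (4 + 3 * √2) + (4 - 3 * √2) * t ^ 2)
    - 12 * x ^ 2 * t

lemma laplaceNum_zero : laplaceNum 0 0 = 18 * (140 + 99 * √2) := by
  unfold laplaceNum P3polyRev; ring

lemma laplaceDen_zero : laplaceDen 0 0 = 4 + 3 * √2 := by
  unfold laplaceDen; ring

-- Both sides are `9 (4 + 3√2) ^ 3 / (4 + 3√2) ^ 4`, as `(4 + 3√2)(3√2 - 4) = 2`.
lemma nine_half_mul_three_sqrt_two_sub_four :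
    (9 / 2) * (3 * √2 - 4) = 18 * (140 + 99 * √2) / (4 + 3 * √2) ^ 4 := by
  rw [eq_div_iff (by positivity)]
  linear_combination (3564 + 6075 * √2 + 4374 * √2 ^ 2 + (2187 / 2) * √2 ^ 3)
    * sq_sqrt (zero_le_two : (0 : ℝ) ≤ 2)

lemma tendsto_laplaceNum_div_laplaceDen :
    Tendsto (fun p : ℝ × ℝ ↦ laplaceNum p.1 p.2 / laplaceDen p.1 p.2 ^ 4) (𝓝 (0, 0))
      (𝓝 ((9 / 2) * (3 * √2 - 4))) := by
  have hnum : Continuous fun p : ℝ × ℝ ↦ laplaceNum p.1 p.2 := by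
    unfold laplaceNum PpolyRev P1polyRev P2polyRev P3polyRev; fun_prop
  have hden : Continuous fun p : ℝ × ℝ ↦ laplaceDen p.1 p.2 := by
    unfold laplaceDen; fun_prop
  rw [nine_half_mul_three_sqrt_two_sub_four, ← laplaceNum_zero, ← laplaceDen_zero]
  exact (hnum.tendsto _).div ((hden.pow 4).tendsto _) (by rw [laplaceDen_zero]; positivity)

lemma Elaplace_div_exp {σ : ℝ} (hσ : 0 < σ) :
    Elaplace σ / exp (-(√6 * σ ^ ((1 : ℝ) / 4))) =
      laplaceNum (σ ^ ((1 : ℝ) / 4))⁻¹ (exp (-(√6 * σ ^ ((1 : ℝ) / 4)))) /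
        laplaceDen (σ ^ ((1 : ℝ) / 4))⁻¹ (exp (-(√6 * σ ^ ((1 : ℝ) / 4)))) ^ 4 := by
  dsimp only [Elaplace]
  set r := σ ^ ((1 : ℝ) / 4)
  have hr : r ≠ 0 := (rpow_pos_of_pos hσ _).ne'
  set t := exp (-(√6 * r))
  have ht : t ≠ 0 := (exp_pos _).ne'
  have hpow : ∀ n : ℕ, exp (-(n * √6 * r)) = t ^ n := fun n ↦ by
    rw [← exp_nat_mul]; ring_nf
  have hpow_inv : ∀ n : ℕ, exp (n * √6 * r) = (t ^ n)⁻¹ := fun n ↦ by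
    rw [← hpow, ← exp_neg, neg_neg]
  have e1 : exp (√6 * r) = t⁻¹ := by simp only [t, exp_neg, inv_inv]
  have e2 := hpow 2
  have e3 := hpow 3
  have f2 := hpow_inv 2
  have f3 := hpow_inv 3
  push_cast at e2 e3 f2 f3
  rw [e1, e2, e3, f2, f3]
  rw [Ppoly_eq_pow_mul_PpolyRev hr, P1poly_eq_pow_mul_P1polyRev hr, P1poly_eq_pow_mul_P1polyRev hr,
    P2poly_eq_pow_mul_P2polyRev hr, P2poly_eq_pow_mul_P2polyRev hr,
    P3poly_eq_pow_mul_P3polyRev hr, P3poly_eq_pow_mul_P3polyRev hr]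
  refine div_pow_div_eq_of_eq_mul (s := r ^ 2 / t) (by positivity) ht ?_ ?_
  · unfold laplaceNum; field_simp; ring
  · unfold Qpoly laplaceDen; field_simp

/-- E[e^{-σV}] ~ (9/2)(3√2 - 4)·e^{-√6·σ^{1/4}} as σ → +∞. -/
theorem stmt_10 :
    Elaplace ~[Filter.atTop]
      (fun σ : ℝ => (9 / 2) * (3 * Real.sqrt 2 - 4) *
        Real.exp (-(Real.sqrt 6 * σ ^ ((1 : ℝ) / 4)))) := by
  refine isEquivalent_const_mul_of_tendsto_div ?_ ?_
  · rw [nine_half_mul_three_sqrt_two_sub_four]; positivity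
  have hlim := tendsto_laplaceNum_div_laplaceDen.comp
    ((tendsto_inv_exp_neg_mul_atTop (sqrt_pos.2 (by norm_num : (0 : ℝ) < 6))).comp
      (tendsto_rpow_atTop (by norm_num : (0 : ℝ) < 1 / 4)))
  refine hlim.congr' ?_
  filter_upwards [eventually_gt_atTop 0] with σ hσ
  exact (Elaplace_div_exp hσ).symm
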